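/- arXiv:1409.4679 — 4 statements merged into one kernel-verified Lean document; each statement's English description precedes it below -/
import Mathlib

section
/- Let 0 < R < 1/2 and define ξ : (−R, R) → ℝ by ξ(z) = 1/(z² − R²). Then there exists a constant C > 0, depending only on R, such that for all z ∈ (−R, R) and all ε ∈ (0,1): −ξ''(z) − (ξ'(z))² ≤ C and −ε ξ''(z) − (ξ'(z))² ≤ C. -/
open Set Filter Topology

/-
With `t = R² − z² > 0` one computes `ξ' = −2z/t²` and `ξ'' = −(6z² + 2R²)/t³`, so that
`−ξ'' − ξ'² = (8R²t − 6t² + 4t − 4R²)/t⁴ ≤ ((8R² + 4)t − 4R²)/t⁴`.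
The right-hand side is negative for small `t` and at most `(8R² + 4)/t³` otherwise, hence bounded.
Since `ξ'' ≤ 0`, the `ε`-version is weaker.
-/

lemma sub_div_pow_four_le {a b t : ℝ} (hb : 0 < b) (ht : 0 < t) :
    (a * t - b) / t ^ 4 ≤ a ^ 4 / b ^ 3 := by
  rcases le_or_gt (a * t) b with hsmall | hlarge
  · exact (div_nonpos_of_nonpos_of_nonneg (by linarith) (by positivity)).trans (by positivity)
  · have ha : 0 < a := by nlinarith
    have hbt : b / a ≤ t := (div_le_iff₀ ha).2 (by linarith)
    calc (a * t - b) / t ^ 4 ≤ a * t / t ^ 4 := by gcongr; linarith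
      _ = a / t ^ 3 := by field_simp
      _ ≤ a / (b / a) ^ 3 := by gcongr
      _ = a ^ 4 / b ^ 3 := by field_simp

noncomputable def barrier (R z : ℝ) : ℝ := 1 / (z ^ 2 - R ^ 2)

section barrier

variable {R z : ℝ}

lemma hasDerivAt_barrier (hz : z ^ 2 - R ^ 2 ≠ 0) :
    HasDerivAt (barrier R) (-(2 * z) / (z ^ 2 - R ^ 2) ^ 2) z := by
  have h : HasDerivAt (fun y : ℝ => y ^ 2 - R ^ 2) (2 * z) z := by
    simpa using (hasDerivAt_pow 2 z).sub_const (R ^ 2)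
  unfold barrier
  simpa only [one_div] using h.fun_inv hz

lemma deriv_barrier_eventuallyEq (hz : z ^ 2 - R ^ 2 ≠ 0) :
    deriv (barrier R) =ᶠ[𝓝 z] fun y => -(2 * y) / (y ^ 2 - R ^ 2) ^ 2 := by
  have hopen : IsOpen {y : ℝ | y ^ 2 - R ^ 2 ≠ 0} :=
    isOpen_ne.preimage (by fun_prop)
  filter_upwards [hopen.mem_nhds hz] with y hy
  exact (hasDerivAt_barrier hy).deriv

lemma hasDerivAt_deriv_barrier (hz : z ^ 2 - R ^ 2 ≠ 0) :
    HasDerivAt (deriv (barrier R)) ((6 * z ^ 2 + 2 * R ^ 2) / (z ^ 2 - R ^ 2) ^ 3) z := by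
  refine HasDerivAt.congr_of_eventuallyEq ?_ (deriv_barrier_eventuallyEq hz)
  have hnum : HasDerivAt (fun y : ℝ => -(2 * y)) (-2) z := by
    simpa using (hasDerivAt_id z).const_mul (-2 : ℝ)
  have hden : HasDerivAt (fun y : ℝ => (y ^ 2 - R ^ 2) ^ 2) (2 * (z ^ 2 - R ^ 2) * (2 * z)) z := by
    simpa using ((hasDerivAt_pow 2 z).sub_const (R ^ 2)).fun_pow 2
  refine (hnum.fun_div hden (pow_ne_zero 2 hz)).congr_deriv ?_
  field_simp
  ring

lemma deriv_deriv_barrier_nonpos (hz : z ^ 2 < R ^ 2) : deriv (deriv (barrier R)) z ≤ 0 := by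
  rw [(hasDerivAt_deriv_barrier (by linarith)).deriv]
  exact div_nonpos_of_nonneg_of_nonpos (by positivity) (Odd.pow_nonpos (by decide) (by linarith))

lemma neg_deriv_deriv_barrier_sub_sq_le (hz : z ^ 2 < R ^ 2) :
    -deriv (deriv (barrier R)) z - deriv (barrier R) z ^ 2
      ≤ ((8 * R ^ 2 + 4) * (R ^ 2 - z ^ 2) - 4 * R ^ 2) / (R ^ 2 - z ^ 2) ^ 4 := by
  have hne : z ^ 2 - R ^ 2 ≠ 0 := by linarith
  have ht : 0 < R ^ 2 - z ^ 2 := by linarith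
  rw [(hasDerivAt_deriv_barrier hne).deriv, (hasDerivAt_barrier hne).deriv]
  have hexact : -((6 * z ^ 2 + 2 * R ^ 2) / (z ^ 2 - R ^ 2) ^ 3) - (-(2 * z) / (z ^ 2 - R ^ 2) ^ 2) ^ 2
      = ((8 * R ^ 2 + 4) * (R ^ 2 - z ^ 2) - 4 * R ^ 2 - 6 * (R ^ 2 - z ^ 2) ^ 2)
        / (R ^ 2 - z ^ 2) ^ 4 := by
    field_simp
    ring
  rw [hexact]
  exact div_le_div_of_nonneg_right (by nlinarith) (by positivity)

end barrier

theorem barrier_derivative_bound_general (R : ℝ) (hR0 : 0 < R) :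
    ∃ C : ℝ, 0 < C ∧ ∀ z ∈ Ioo (-R) R, ∀ ε ∈ Ioo (0 : ℝ) 1,
      (-(deriv (deriv fun z : ℝ => 1 / (z ^ 2 - R ^ 2)) z)
          - (deriv (fun z : ℝ => 1 / (z ^ 2 - R ^ 2)) z) ^ 2 ≤ C) ∧
      (-(ε * deriv (deriv fun z : ℝ => 1 / (z ^ 2 - R ^ 2)) z)
          - (deriv (fun z : ℝ => 1 / (z ^ 2 - R ^ 2)) z) ^ 2 ≤ C) := by
  refine ⟨(8 * R ^ 2 + 4) ^ 4 / (4 * R ^ 2) ^ 3, by positivity, ?_⟩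
  rintro z ⟨hRz, hzR⟩ ε ⟨-, hε1⟩
  have hz : z ^ 2 < R ^ 2 := by nlinarith
  have hbound : -deriv (deriv (barrier R)) z - deriv (barrier R) z ^ 2
      ≤ (8 * R ^ 2 + 4) ^ 4 / (4 * R ^ 2) ^ 3 :=
    (neg_deriv_deriv_barrier_sub_sq_le hz).trans
      (sub_div_pow_four_le (by positivity) (by linarith))
  have hscale : -deriv (deriv (barrier R)) z ≥ -(ε * deriv (deriv (barrier R)) z) := by
    nlinarith [deriv_deriv_barrier_nonpos hz]
  change _ ≤ _ ∧ -(ε * deriv (deriv (barrier R)) z) - deriv (barrier R) z ^ 2 ≤ _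
  exact ⟨hbound, by linarith⟩

/-- For `0 < R < 1/2` and `ξ(z) = 1/(z² − R²)` on `(−R,R)`, there is a
constant `C > 0` depending only on `R` such that for all `z ∈ (−R,R)` and `ε ∈ (0,1)`:
`−ξ''(z) − (ξ'(z))² ≤ C` and `−ε ξ''(z) − (ξ'(z))² ≤ C`. -/
theorem barrier_derivative_bound (R : ℝ) (hR0 : 0 < R) (hR : R < 1 / 2) :
    ∃ C : ℝ, 0 < C ∧ ∀ z ∈ Ioo (-R) R, ∀ ε ∈ Ioo (0 : ℝ) 1,
      (-(deriv (deriv fun z : ℝ => 1 / (z ^ 2 - R ^ 2)) z)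
          - (deriv (fun z : ℝ => 1 / (z ^ 2 - R ^ 2)) z) ^ 2 ≤ C) ∧
      (-(ε * deriv (deriv fun z : ℝ => 1 / (z ^ 2 - R ^ 2)) z)
          - (deriv (fun z : ℝ => 1 / (z ^ 2 - R ^ 2)) z) ^ 2 ≤ C) :=
  barrier_derivative_bound_general R hR0
end

section
/- Fix 0 < θ_m < θ_M and α, r > 0. Let (x₀,t₀) ∈ ℝ × (0,∞), let a > 0, and let v be a real-valued C² function with continuous second derivatives on a neighborhood of (x₀,t₀). Set λ = ∂_x v(x₀,t₀), and suppose h ∈ ℝ and Q ∈ C²([θ_m,θ_M]) satisfy (−h + θλ² + r) Q(θ) + α Q''(θ) = 0 for all θ ∈ [θ_m,θ_M], Q'(θ_m) = Q'(θ_M) = 0, Q > 0 on [θ_m,θ_M], and that ∂_t v(x₀,t₀) − h = −a. Define v^ε(x,θ,t) = v(x,t) + ε ln Q(θ). Then there exist s > 0 and ε₁ > 0 such that for all (x,t) with |(x,t) − (x₀,t₀)| < s, all θ ∈ (θ_m,θ_M) and all 0 < ε ≤ ε₁: ∂_t v^ε − ε θ ∂²_{xx} v^ε − θ (∂_x v^ε)²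 − (α/ε) ∂²_{θθ} v^ε − (α/ε²)(∂_θ v^ε)² − r ≤ −a/2. -/
/-!
Substituting `v^ε = v + ε ln Q`, the Hopf–Cole identity
`(ln Q)'' + ((ln Q)')² = Q''/Q` turns the two `θ`-terms into `α Q''/Q`, which the
eigenvalue equation replaces by `h - θλ² - r`. What is left is
`(∂_t v - h) - θ((∂_x v)² - λ²) - εθ ∂²_{xx} v`: it equals `-a` at `(x₀,t₀)` when `ε = 0`,
and since `θ` ranges over a bounded interval and the derivatives of `v` are continuous, it stays
below `-a/2` near `(x₀,t₀)` for all small `ε`.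
-/

open Set Real Filter Topology Function

section Partial

variable {𝕜 E : Type*} [NontriviallyNormedField 𝕜] [NormedAddCommGroup E] [NormedSpace 𝕜 E]

theorem ContDiffAt.eventually_differentiableAt {F : Type*} [NormedAddCommGroup F]
    [NormedSpace 𝕜 F] {f : F → E} {y : F} {n : WithTop ℕ∞} (hf : ContDiffAt 𝕜 n f y)
    (hn : 1 ≤ n) : ∀ᶠ z in 𝓝 y, DifferentiableAt 𝕜 f z :=
  ((hf.of_le hn).eventually (by simp)).mono fun _ hz => hz.differentiableAt one_ne_zero

noncomputable def partialFst (v : 𝕜 → 𝕜 → E) (x t : 𝕜) : E := deriv (fun y => v y t) x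

noncomputable def partialSnd (v : 𝕜 → 𝕜 → E) (x t : 𝕜) : E := deriv (fun s => v x s) t

variable {v : 𝕜 → 𝕜 → E} {x t : 𝕜}

theorem DifferentiableAt.partialFst_eq (hv : DifferentiableAt 𝕜 (uncurry v) (x, t)) :
    partialFst v x t = fderiv 𝕜 (uncurry v) (x, t) (1, 0) := by
  have := hv.hasFDerivAt.comp_hasDerivAt x ((hasDerivAt_id x).prodMk (hasDerivAt_const x t))
  exact this.deriv

theorem DifferentiableAt.partialSnd_eq (hv : DifferentiableAt 𝕜 (uncurry v) (x, t)) :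
    partialSnd v x t = fderiv 𝕜 (uncurry v) (x, t) (0, 1) := by
  have := hv.hasFDerivAt.comp_hasDerivAt t ((hasDerivAt_const t x).prodMk (hasDerivAt_id t))
  exact this.deriv

variable {p : 𝕜 × 𝕜} {m n : WithTop ℕ∞}

theorem ContDiffAt.partialFst (hv : ContDiffAt 𝕜 n (uncurry v) p) (hmn : m + 1 ≤ n) :
    ContDiffAt 𝕜 m (uncurry (partialFst v)) p :=
  ((hv.fderiv_right hmn).clm_apply contDiffAt_const).congr_of_eventuallyEq
    ((hv.eventually_differentiableAt (le_add_self.trans hmn)).mono fun _ hq => hq.partialFst_eq)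

theorem ContDiffAt.partialSnd (hv : ContDiffAt 𝕜 n (uncurry v) p) (hmn : m + 1 ≤ n) :
    ContDiffAt 𝕜 m (uncurry (partialSnd v)) p :=
  ((hv.fderiv_right hmn).clm_apply contDiffAt_const).congr_of_eventuallyEq
    ((hv.eventually_differentiableAt (le_add_self.trans hmn)).mono fun _ hq => hq.partialSnd_eq)

end Partial

theorem deriv_deriv_log_add_sq {Q : ℝ → ℝ} {θ : ℝ} (hQ : ContDiffAt ℝ 2 Q θ) (hQθ : Q θ ≠ 0) :
    deriv (deriv fun ϑ => log (Q ϑ)) θ + deriv (fun ϑ => log (Q ϑ)) θ ^ 2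
      = deriv (deriv Q) θ / Q θ := by
  have hlog : (deriv fun ϑ => log (Q ϑ)) =ᶠ[𝓝 θ] fun ϑ => deriv Q ϑ / Q ϑ := by
    filter_upwards [hQ.eventually_differentiableAt one_le_two,
      hQ.continuousAt.eventually_ne hQθ] with ϑ hd hne
    exact deriv.log hd hne
  have hQ₁ : DifferentiableAt ℝ Q θ := hQ.differentiableAt two_ne_zero
  have hQ₂ : DifferentiableAt ℝ (deriv Q) θ :=
    (hQ.derivWithin (m := 1) (by norm_num)).differentiableAt one_ne_zero
  rw [hlog.deriv_eq, deriv.log hQ₁ hQθ, deriv_fun_div hQ₂ hQ₁ hQθ]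
  field_simp
  ring

theorem hopfCole_deriv_const_add_mul_log (c α : ℝ) {Q : ℝ → ℝ} {θ ε : ℝ}
    (hQ : ContDiffAt ℝ 2 Q θ) (hQθ : Q θ ≠ 0) (hε : ε ≠ 0) :
    α / ε * deriv (deriv fun ϑ => c + ε * log (Q ϑ)) θ
        + α / ε ^ 2 * deriv (fun ϑ => c + ε * log (Q ϑ)) θ ^ 2
      = α * deriv (deriv Q) θ / Q θ := by
  simp only [deriv_const_add', deriv_const_mul_field']
  rw [mul_div_assoc, ← deriv_deriv_log_add_sq hQ hQθ]
  field_simp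

theorem exists_forall_eventually_le_of_continuousAt {X : Type*} [TopologicalSpace X]
    {A B C : X → ℝ} {p₀ : X} (hA : ContinuousAt A p₀) (hB : ContinuousAt B p₀)
    (hC : ContinuousAt C p₀) {a Θ : ℝ} (ha : 0 < a) (hA₀ : A p₀ = -a) (hΘ : 0 ≤ Θ) :
    ∃ ε₁ > 0, ∀ᶠ p in 𝓝 p₀, ∀ θ ε : ℝ, |θ| ≤ Θ → |ε| ≤ ε₁ →
      A p - ε * θ * C p - θ * (B p - B p₀) ≤ -a / 2 := by
  set M := |C p₀| + 1
  have hM : 0 < M := by positivity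
  refine ⟨a / (6 * M * (Θ + 1)), by positivity, ?_⟩
  have hA' : ∀ᶠ p in 𝓝 p₀, A p < -a + a / 6 :=
    hA.eventually (Iio_mem_nhds (by linarith))
  have hB' : ∀ᶠ p in 𝓝 p₀, Θ * |B p - B p₀| < a / 6 :=
    (continuousAt_const.mul (hB.sub continuousAt_const).abs).eventually
      (Iio_mem_nhds (by simpa using ha))
  have hC' : ∀ᶠ p in 𝓝 p₀, |C p| < M := hC.abs.eventually (Iio_mem_nhds (lt_add_one _))
  filter_upwards [hA', hB', hC'] with p hAp hBp hCp θ ε hθ hε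
  have hεθC : |ε * θ * C p| ≤ a / 6 := calc
    |ε * θ * C p| = |ε| * |θ| * |C p| := by rw [abs_mul, abs_mul]
    _ ≤ a / (6 * M * (Θ + 1)) * Θ * M := by gcongr
    _ ≤ a / 6 := by
      rw [div_mul_eq_mul_div, div_mul_eq_mul_div, div_le_div_iff₀ (by positivity) (by norm_num)]
      nlinarith
  have hθB : |θ * (B p - B p₀)| < a / 6 := calc
    |θ * (B p - B p₀)| = |θ| * |B p - B p₀| := abs_mul _ _
    _ ≤ Θ * |B p - B p₀| := by gcongr
    _ < a / 6 := hBp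
  linarith [neg_le_abs (ε * θ * C p), neg_le_abs (θ * (B p - B p₀))]

theorem dist_le_sqrt_sq_add_sq (x t x₀ t₀ : ℝ) :
    dist (x, t) (x₀, t₀) ≤ √((x - x₀) ^ 2 + (t - t₀) ^ 2) := by
  rw [Prod.dist_eq, Real.dist_eq, Real.dist_eq]
  exact max_le (Real.abs_le_sqrt (by nlinarith [sq_nonneg (t - t₀)]))
    (Real.abs_le_sqrt (by nlinarith [sq_nonneg (x - x₀)]))

theorem perturbed_test_function_general (θm θM α r : ℝ)
    (x₀ t₀ a h : ℝ) (ha : 0 < a)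
    (v : ℝ → ℝ → ℝ) (Q : ℝ → ℝ)
    (hv : ∃ U ∈ nhds (x₀, t₀), ContDiffOn ℝ 2 (fun p : ℝ × ℝ => v p.1 p.2) U)
    (hQreg : ContDiffOn ℝ 2 Q (Icc θm θM))
    (hode : ∀ θ ∈ Icc θm θM,
      (-h + θ * (deriv (fun y => v y t₀) x₀) ^ 2 + r) * Q θ
          + α * deriv (deriv Q) θ = 0)
    (hQpos : ∀ θ ∈ Icc θm θM, 0 < Q θ)
    (hvt : deriv (fun s => v x₀ s) t₀ - h = -a) :
    ∃ s : ℝ, 0 < s ∧ ∃ ε₁ : ℝ, 0 < ε₁ ∧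
      ∀ x θ t ε : ℝ,
        Real.sqrt ((x - x₀) ^ 2 + (t - t₀) ^ 2) < s → θ ∈ Ioo θm θM →
        0 < ε → ε ≤ ε₁ →
        deriv (fun s' => v x s' + ε * Real.log (Q θ)) t
            - ε * θ * deriv (deriv fun y => v y t + ε * Real.log (Q θ)) x
            - θ * (deriv (fun y => v y t + ε * Real.log (Q θ)) x) ^ 2
            - α / ε * deriv (deriv fun ϑ => v x t + ε * Real.log (Q ϑ)) θ
            - α / ε ^ 2 * (deriv (fun ϑ => v x t + ε * Real.log (Q ϑ)) θ) ^ 2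
            - r ≤ -a / 2 := by
  obtain ⟨U, hU, hvU⟩ := hv
  have hv₂ : ContDiffAt ℝ 2 (uncurry v) (x₀, t₀) := hvU.contDiffAt hU
  have hvₓ : ContDiffAt ℝ 1 (uncurry (partialFst v)) (x₀, t₀) :=
    hv₂.partialFst one_add_one_eq_two.le
  obtain ⟨ε₁, hε₁, hnear⟩ := exists_forall_eventually_le_of_continuousAt
    (A := fun p => uncurry (partialSnd v) p - h) (B := fun p => uncurry (partialFst v) p ^ 2)
    ((hv₂.partialSnd one_add_one_eq_two.le).continuousAt.sub continuousAt_const)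
    (hvₓ.continuousAt.pow 2) (hvₓ.partialFst (m := 0) (by simp)).continuousAt
    ha hvt (le_max_of_le_left (abs_nonneg θm))
  obtain ⟨s, hs, hball⟩ := Metric.eventually_nhds_iff.mp hnear
  refine ⟨s, hs, ε₁, hε₁, fun x θ t ε hxt hθ hε hεε₁ => ?_⟩
  have hθ' : θ ∈ Icc θm θM := Ioo_subset_Icc_self hθ
  have hQθ : 0 < Q θ := hQpos θ hθ'
  have hbound := hball ((dist_le_sqrt_sq_add_sq x t x₀ t₀).trans_lt hxt) θ ε
    (abs_le_max_abs_abs hθ.1.le hθ.2.le) (by rwa [abs_of_pos hε])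
  have hθterms := hopfCole_deriv_const_add_mul_log (v x t) α
    (hQreg.contDiffAt (Icc_mem_nhds hθ.1 hθ.2)) hQθ.ne' hε.ne'
  have hodeθ : α * deriv (deriv Q) θ / Q θ = h - θ * deriv (fun y => v y t₀) x₀ ^ 2 - r := by
    field_simp
    linear_combination hode θ hθ'
  simp only [uncurry_apply_pair, partialFst, partialSnd] at hbound
  simp only [deriv_add_const, deriv_add_const']
  linarith

/-- construction of the perturbed test function. If `v` is `C²` near
`(x₀,t₀)`, `λ = ∂ₓ v(x₀,t₀)`, `(h, Q)` solves the spectral ODE with parameter `λ`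
(Neumann conditions, `Q > 0`), and `∂_t v(x₀,t₀) − h = −a` with `a > 0`, then for the
perturbed test function `v^ε(x,θ,t) = v(x,t) + ε ln Q(θ)` there are `s > 0`, `ε₁ > 0`
such that for all `(x,t)` within distance `s` of `(x₀,t₀)`, all `θ ∈ (θm,θM)` and all
`0 < ε ≤ ε₁`:
`∂_t v^ε − ε θ ∂²ₓₓ v^ε − θ (∂ₓ v^ε)² − (α/ε) ∂²_θθ v^ε − (α/ε²)(∂_θ v^ε)² − r ≤ −a/2`. -/
theorem perturbed_test_function (θm θM α r : ℝ)
    (hθm : 0 < θm) (hθθ : θm < θM) (hα : 0 < α) (hr : 0 < r)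
    (x₀ t₀ a h : ℝ) (ht₀ : 0 < t₀) (ha : 0 < a)
    (v : ℝ → ℝ → ℝ) (Q : ℝ → ℝ)
    (hv : ∃ U ∈ nhds (x₀, t₀), ContDiffOn ℝ 2 (fun p : ℝ × ℝ => v p.1 p.2) U)
    (hQreg : ContDiffOn ℝ 2 Q (Icc θm θM))
    (hode : ∀ θ ∈ Icc θm θM,
      (-h + θ * (deriv (fun y => v y t₀) x₀) ^ 2 + r) * Q θ
          + α * deriv (deriv Q) θ = 0)
    (hNm : deriv Q θm = 0) (hNM : deriv Q θM = 0)
    (hQpos : ∀ θ ∈ Icc θm θM, 0 < Q θ)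
    (hvt : deriv (fun s => v x₀ s) t₀ - h = -a) :
    ∃ s : ℝ, 0 < s ∧ ∃ ε₁ : ℝ, 0 < ε₁ ∧
      ∀ x θ t ε : ℝ,
        Real.sqrt ((x - x₀) ^ 2 + (t - t₀) ^ 2) < s → θ ∈ Ioo θm θM →
        0 < ε → ε ≤ ε₁ →
        deriv (fun s' => v x s' + ε * Real.log (Q θ)) t
            - ε * θ * deriv (deriv fun y => v y t + ε * Real.log (Q θ)) x
            - θ * (deriv (fun y => v y t + ε * Real.log (Q θ)) x) ^ 2
            - α / ε * deriv (deriv fun ϑ => v x t + ε * Real.log (Q ϑ)) θ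
            - α / ε ^ 2 * (deriv (fun ϑ => v x t + ε * Real.log (Q ϑ)) θ) ^ 2
            - r ≤ -a / 2 :=
  perturbed_test_function_general θm θM α r x₀ t₀ a h ha v Q hv hQreg hode hQpos hvt
end

section
/- Fix constants 0 < θ_m < θ_M and α, r > 0. If λ ∈ ℝ, h ∈ ℝ and Q ∈ C²([θ_m,θ_M]) satisfy (−h + θλ² + r) Q(θ) + α Q''(θ) = 0 for all θ ∈ [θ_m,θ_M], Q'(θ_m) = Q'(θ_M) = 0, Q > 0 on [θ_m,θ_M], and ∫_{θ_m}^{θ_M} Q(θ) dθ = 1, then λ² θ_m + r ≤ h ≤ λ² θ_M + r. -/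
/-!
If `h` lay outside `[λ² θm + r, λ² θM + r]`, the coefficient `-h + θ λ² + r` would have no zero on
`[θm, θM]`, and since `Q` does not vanish there, neither would `Q''`. But `Q'(θm) = Q'(θM)`, so by
Rolle's theorem applied to `Q'` the second derivative must vanish somewhere in `[θm, θM]`.
-/

open Set

/-- Rolle's theorem for `deriv` without any regularity hypothesis: wherever `g` is not
differentiable, `deriv g` is `0` by convention, and otherwise `g` is continuous on `[a, b]`. -/
theorem exists_mem_Icc_deriv_eq_zero_of_eq {g : ℝ → ℝ} {a b : ℝ} (hab : a < b) (hg : g a = g b) :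
    ∃ c ∈ Icc a b, deriv g c = 0 := by
  by_contra! hne
  have hcont : ContinuousOn g (Icc a b) := fun x hx =>
    (differentiableAt_of_deriv_ne_zero (hne x hx)).continuousAt.continuousWithinAt
  obtain ⟨c, hc, hc0⟩ := exists_deriv_eq_zero hab hcont hg
  exact hne c (Ioo_subset_Icc_self hc) hc0

theorem mem_image_of_neumann_eigenfunction {V Q : ℝ → ℝ} {a b h α : ℝ} (hab : a < b)
    (hode : ∀ x ∈ Icc a b, (V x - h) * Q x + α * deriv (deriv Q) x = 0)
    (ha : deriv Q a = 0) (hb : deriv Q b = 0) (hQ : ∀ x ∈ Icc a b, Q x ≠ 0) :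
    h ∈ V '' Icc a b := by
  obtain ⟨c, hc, hQ''⟩ := exists_mem_Icc_deriv_eq_zero_of_eq hab (ha.trans hb.symm)
  have hVQ : (V c - h) * Q c = 0 := by simpa [hQ''] using hode c hc
  exact ⟨c, hc, sub_eq_zero.mp ((mul_eq_zero.mp hVQ).resolve_right (hQ c hc))⟩

theorem spectral_eigenvalue_bounds_general (θm θM α r lam h : ℝ) (Q : ℝ → ℝ)
    (hθθ : θm < θM)
    (hode : ∀ θ ∈ Icc θm θM, (-h + θ * lam ^ 2 + r) * Q θ + α * deriv (deriv Q) θ = 0)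
    (hNm : deriv Q θm = 0) (hNM : deriv Q θM = 0)
    (hQpos : ∀ θ ∈ Icc θm θM, 0 < Q θ) :
    lam ^ 2 * θm + r ≤ h ∧ h ≤ lam ^ 2 * θM + r := by
  obtain ⟨θ, ⟨hθm, hθM⟩, rfl⟩ : h ∈ (fun θ => θ * lam ^ 2 + r) '' Icc θm θM :=
    mem_image_of_neumann_eigenfunction (α := α) hθθ
      (fun θ hθ => by linear_combination hode θ hθ) hNm hNM fun θ hθ => (hQpos θ hθ).ne'
  have hlam : 0 ≤ lam ^ 2 := sq_nonneg lam
  constructor <;> nlinarith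

/-- If `(h, Q)` solves the spectral problem with parameter `λ`
(on `[θm, θM]`, with Neumann boundary conditions, `Q > 0` and `∫ Q = 1`),
then `λ² θm + r ≤ h ≤ λ² θM + r`. -/
theorem spectral_eigenvalue_bounds (θm θM α r lam h : ℝ) (Q : ℝ → ℝ)
    (hθm : 0 < θm) (hθθ : θm < θM) (hα : 0 < α) (hr : 0 < r)
    (hQreg : ContDiffOn ℝ 2 Q (Icc θm θM))
    (hode : ∀ θ ∈ Icc θm θM, (-h + θ * lam ^ 2 + r) * Q θ + α * deriv (deriv Q) θ = 0)
    (hNm : deriv Q θm = 0) (hNM : deriv Q θM = 0)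
    (hQpos : ∀ θ ∈ Icc θm θM, 0 < Q θ)
    (hQnorm : (∫ θ in θm..θM, Q θ) = 1) :
    lam ^ 2 * θm + r ≤ h ∧ h ≤ lam ^ 2 * θM + r :=
  spectral_eigenvalue_bounds_general θm θM α r lam h Q hθθ hode hNm hNM hQpos
end

section
/- Let Ω ⊂ ℝ be a nonempty bounded interval, let c* > 0, and let g : ℝ → ℝ be a bounded C¹ function that is positive on Ω, negative on ℝ ∖ cl(Ω), attains its maximum at some x̄ ∈ Ω, is strictly increasing on (−∞, x̄] and strictly decreasing on [x̄, ∞). Let w : ℝ × [0,∞) → ℝ be a bounded continuous function with w(·,0) = g that is a viscosity solution of ∂_t w = c* |∂_x w| on ℝ × (0,∞). Then for every t > 0: {x ∈ ℝ : w(x,t) < 0} = {x ∈ ℝ : dist(x,Ω) > c* t} and {x ∈ ℝ : w(x,t) > 0} = {x ∈ ℝ : dist(x,Ω) < c* t}. -/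
/-!
Everything reduces to comparing `w` with explicit strict barriers built out of the smooth
positive part `smoothPos κ u = (u + √(u ^ 2 + κ ^ 2)) / 2`.

If `dist(x₀, Ω) > c* t₀`, the initial datum is negative on a closed ball of radius `r > c* t₀`
around `x₀`. A well whose walls close in from both sides at a speed `v > c*` is a strict
supersolution lying above `w` at `t = 0` and at infinity, and is still negative at `(x₀, t₀)`.

If `dist(x₀, Ω) < c* t₀`, pick `y₀ ∈ Ω` with `|x₀ - y₀| < c* t₀`. A plateau bump under the
positive datum near `y₀`, travelling to `x₀` at speed `|x₀ - y₀| / t₀ ≤ c*` while sinking in time,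
is a strict subsolution lying below `w`, and is still positive at `(x₀, t₀)`.

On the front `dist(x, Ω) = c* t` itself, `w(x, ·)` changes sign at `t`, so `w(x, t) = 0` by
continuity.
-/

open Set Filter Topology

noncomputable def smoothPos (κ u : ℝ) : ℝ := (u + √(u ^ 2 + κ ^ 2)) / 2

section SmoothPos

variable {κ : ℝ}

lemma contDiff_smoothPos (hκ : κ ≠ 0) : ContDiff ℝ 1 (smoothPos κ) :=
  (contDiff_id.add ((by fun_prop : ContDiff ℝ 1 fun u : ℝ => u ^ 2 + κ ^ 2).sqrt
    fun u => (by positivity : 0 < u ^ 2 + κ ^ 2).ne')).div_const 2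

lemma deriv_smoothPos_pos (hκ : κ ≠ 0) (u : ℝ) : 0 < deriv (smoothPos κ) u := by
  have hs : 0 < √(u ^ 2 + κ ^ 2) := Real.sqrt_pos.2 (by positivity)
  have hd : HasDerivAt (smoothPos κ) ((1 + u / √(u ^ 2 + κ ^ 2)) / 2) u := by
    have := ((hasDerivAt_id' u).add (((hasDerivAt_pow 2 u).add_const (κ ^ 2)).sqrt
      (by positivity))).div_const 2
    refine this.congr_deriv ?_
    field_simp
    ring
  have hu : |u| < √(u ^ 2 + κ ^ 2) :=
    (Real.lt_sqrt (abs_nonneg u)).2 (by rw [sq_abs]; linarith [pow_pos (abs_pos.2 hκ) 2, sq_abs κ])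
  have : -1 < u / √(u ^ 2 + κ ^ 2) := by
    rw [lt_div_iff₀ hs]
    linarith [neg_abs_le u]
  rw [hd.deriv]
  linarith

lemma le_smoothPos (κ u : ℝ) : u ≤ smoothPos κ u := by
  have := Real.abs_le_sqrt (le_add_of_nonneg_right (sq_nonneg κ) : u ^ 2 ≤ u ^ 2 + κ ^ 2)
  unfold smoothPos
  linarith [le_abs_self u]

lemma smoothPos_nonneg (κ u : ℝ) : 0 ≤ smoothPos κ u := by
  have := Real.abs_le_sqrt (le_add_of_nonneg_right (sq_nonneg κ) : u ^ 2 ≤ u ^ 2 + κ ^ 2)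
  unfold smoothPos
  linarith [neg_abs_le u]

lemma smoothPos_le_of_nonpos {u : ℝ} (hκ : 0 ≤ κ) (hu : u ≤ 0) : smoothPos κ u ≤ κ / 2 := by
  have : √(u ^ 2 + κ ^ 2) ≤ κ - u := Real.sqrt_le_iff.2 ⟨by linarith, by nlinarith⟩
  unfold smoothPos
  linarith

lemma add_abs_le_smoothPos_add (κ a d : ℝ) :
    a + |d| ≤ smoothPos κ (a + d) + smoothPos κ (a - d) := by
  rcases abs_cases d with ⟨h, -⟩ | ⟨h, -⟩ <;> rw [h]
  · linarith [le_smoothPos κ (a + d), smoothPos_nonneg κ (a - d)]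
  · linarith [le_smoothPos κ (a - d), smoothPos_nonneg κ (a + d)]

end SmoothPos

def IsEikonalSubsolution (c : ℝ) (w : ℝ → ℝ → ℝ) : Prop :=
  ∀ φ : ℝ → ℝ → ℝ, ContDiff ℝ 1 (fun p : ℝ × ℝ => φ p.1 p.2) → ∀ x t : ℝ, 0 < t →
    IsLocalMaxOn (fun p : ℝ × ℝ => w p.1 p.2 - φ p.1 p.2) {p : ℝ × ℝ | 0 < p.2} (x, t) →
    deriv (fun s => φ x s) t ≤ c * |deriv (fun y => φ y t) x|

def IsEikonalSupersolution (c : ℝ) (w : ℝ → ℝ → ℝ) : Prop :=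
  ∀ φ : ℝ → ℝ → ℝ, ContDiff ℝ 1 (fun p : ℝ × ℝ => φ p.1 p.2) → ∀ x t : ℝ, 0 < t →
    IsLocalMinOn (fun p : ℝ × ℝ => w p.1 p.2 - φ p.1 p.2) {p : ℝ × ℝ | 0 < p.2} (x, t) →
    c * |deriv (fun y => φ y t) x| ≤ deriv (fun s => φ x s) t

section Comparison

variable {c : ℝ} {w : ℝ → ℝ → ℝ}

lemma IsEikonalSupersolution.neg (hw : IsEikonalSupersolution c w) :
    IsEikonalSubsolution (-c) (fun x t => -w x t) := by
  intro φ hφ x t ht hmax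
  have hmin : IsLocalMinOn (fun p : ℝ × ℝ => w p.1 p.2 - -φ p.1 p.2)
      {p : ℝ × ℝ | 0 < p.2} (x, t) := by
    filter_upwards [hmax] with p hp
    linarith
  have := hw (fun x t => -φ x t) hφ.neg x t ht hmin
  rw [deriv.fun_neg, deriv.fun_neg, abs_neg] at this
  linarith

theorem IsEikonalSubsolution.le_of_strictSupersolution {Ψ : ℝ → ℝ → ℝ}
    (hw : IsEikonalSubsolution c w)
    (hwc : ContinuousOn (fun p : ℝ × ℝ => w p.1 p.2) {p : ℝ × ℝ | 0 ≤ p.2})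
    (hΨ : ContDiff ℝ 1 (fun p : ℝ × ℝ => Ψ p.1 p.2))
    (hstrict : ∀ x t, 0 < t → c * |deriv (fun y => Ψ y t) x| < deriv (fun s => Ψ x s) t)
    (hinit : ∀ x, w x 0 ≤ Ψ x 0)
    (hfar : ∀ᶠ p in cocompact (ℝ × ℝ) ⊓ 𝓟 {p | 0 ≤ p.2}, w p.1 p.2 ≤ Ψ p.1 p.2)
    {x t : ℝ} (ht : 0 ≤ t) : w x t ≤ Ψ x t := by
  by_contra! hlt
  obtain ⟨p, hp, hmax⟩ := (hwc.sub hΨ.continuous.continuousOn).exists_isMaxOn'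
    (isClosed_le continuous_const continuous_snd) (x₀ := (x, t)) ht
    (hfar.mono fun p hp => (sub_nonpos.2 hp).trans (sub_pos.2 hlt).le)
  have hpos : 0 < w p.1 p.2 - Ψ p.1 p.2 := (sub_pos.2 hlt).trans_le (isMaxOn_iff.1 hmax (x, t) ht)
  have hp2 : 0 < p.2 := by
    refine (show 0 ≤ p.2 from hp).lt_of_ne' fun h0 => ?_
    rw [h0] at hpos
    linarith [hinit p.1]
  have hloc : IsLocalMaxOn (fun p : ℝ × ℝ => w p.1 p.2 - Ψ p.1 p.2)
      {p : ℝ × ℝ | 0 < p.2} (p.1, p.2) :=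
    (hmax.on_subset fun q (hq : 0 < q.2) => hq.le).localize
  linarith [hw Ψ hΨ p.1 p.2 hp2 hloc, hstrict p.1 p.2 hp2]

theorem IsEikonalSupersolution.ge_of_strictSubsolution {φ : ℝ → ℝ → ℝ}
    (hw : IsEikonalSupersolution c w)
    (hwc : ContinuousOn (fun p : ℝ × ℝ => w p.1 p.2) {p : ℝ × ℝ | 0 ≤ p.2})
    (hφ : ContDiff ℝ 1 (fun p : ℝ × ℝ => φ p.1 p.2))
    (hstrict : ∀ x t, 0 < t → deriv (fun s => φ x s) t < c * |deriv (fun y => φ y t) x|)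
    (hinit : ∀ x, φ x 0 ≤ w x 0)
    (hfar : ∀ᶠ p in cocompact (ℝ × ℝ) ⊓ 𝓟 {p | 0 ≤ p.2}, φ p.1 p.2 ≤ w p.1 p.2)
    {x t : ℝ} (ht : 0 ≤ t) : φ x t ≤ w x t := by
  refine neg_le_neg_iff.1 (hw.neg.le_of_strictSupersolution (Ψ := fun x t => -φ x t) hwc.neg
    hφ.neg (fun x t ht => ?_) (fun x => neg_le_neg (hinit x)) (hfar.mono fun _ => neg_le_neg) ht)
  rw [deriv.fun_neg, deriv.fun_neg, abs_neg]
  linarith [hstrict x t ht]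

end Comparison

section Barriers

variable {c : ℝ}

lemma strictSupersolution_counterFronts {v : ℝ} {h : ℝ → ℝ} (hh : Differentiable ℝ h)
    (hpos : ∀ u, 0 < deriv h u) (hc : 0 ≤ c) (hcv : c < v) (a x t : ℝ) :
    c * |deriv (fun y => h (v * t + (y - a)) + h (v * t - (y - a))) x|
      < deriv (fun s => h (v * s + (x - a)) + h (v * s - (x - a))) t := by
  set A := v * t + (x - a)
  set B := v * t - (x - a)
  have hx : HasDerivAt (fun y => h (v * t + (y - a)) + h (v * t - (y - a)))
      (deriv h A * 1 + deriv h B * (-1)) x :=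
    ((hh A).hasDerivAt.comp x (((hasDerivAt_id x).sub_const a).const_add _)).add
      ((hh B).hasDerivAt.comp x (((hasDerivAt_id x).sub_const a).const_sub _))
  have ht : HasDerivAt (fun s => h (v * s + (x - a)) + h (v * s - (x - a)))
      (deriv h A * (v * 1) + deriv h B * (v * 1)) t :=
    ((hh A).hasDerivAt.comp t (((hasDerivAt_id t).const_mul v).add_const _)).add
      ((hh B).hasDerivAt.comp t (((hasDerivAt_id t).const_mul v).sub_const _))
  rw [hx.deriv, ht.deriv]
  have := hpos A
  have := hpos B
  calc c * |deriv h A * 1 + deriv h B * (-1)|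
      ≤ c * (deriv h A + deriv h B) := by
        gcongr
        rw [abs_le]; constructor <;> linarith
    _ < v * (deriv h A + deriv h B) := by gcongr
    _ = _ := by ring

lemma strictSubsolution_travelling {v : ℝ} {P q : ℝ → ℝ} (hP : Differentiable ℝ P)
    (hq : Differentiable ℝ q) (hqpos : ∀ s, 0 < deriv q s) (hv : |v| ≤ c) (x t : ℝ) :
    deriv (fun s => P (x - v * s) - q s) t < c * |deriv (fun y => P (y - v * t) - q t) x| := by
  set A := x - v * t
  have hx : HasDerivAt (fun y => P (y - v * t) - q t) (deriv P A * 1) x :=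
    ((hP A).hasDerivAt.comp x ((hasDerivAt_id x).sub_const _)).sub_const _
  have ht : HasDerivAt (fun s => P (x - v * s) - q s) (deriv P A * -(v * 1) - deriv q t) t :=
    ((hP A).hasDerivAt.comp t (((hasDerivAt_id t).const_mul v).const_sub _)).sub
      (hq t).hasDerivAt
  rw [hx.deriv, ht.deriv, mul_one, mul_one]
  have := hqpos t
  calc deriv P A * -v - deriv q t < |v| * |deriv P A| := by
        nlinarith [neg_abs_le (v * deriv P A), abs_mul v (deriv P A)]
    _ ≤ c * |deriv P A| := by gcongr

lemma eventually_cocompact_inf_halfPlane {P : ℝ → ℝ → Prop} (v R T : ℝ)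
    (h : ∀ x t, 0 ≤ t → (R < |x - v * t| ∨ T < t) → P x t) :
    ∀ᶠ p in cocompact (ℝ × ℝ) ⊓ 𝓟 {p : ℝ × ℝ | 0 ≤ p.2}, P p.1 p.2 := by
  rw [eventually_inf_principal]
  refine mem_cocompact.2 ⟨Icc (-(R + |v| * T)) (R + |v| * T) ×ˢ Icc 0 T,
    isCompact_Icc.prod isCompact_Icc, fun p hp (hp2 : 0 ≤ p.2) => h _ _ hp2 ?_⟩
  by_contra! hcon
  refine hp ⟨abs_le.1 ?_, hp2, hcon.2⟩
  have := abs_sub_abs_le_abs_sub p.1 (v * p.2)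
  rw [abs_mul, abs_of_nonneg hp2] at this
  nlinarith [mul_le_mul_of_nonneg_left hcon.2 (abs_nonneg v)]

lemma exists_strictSupersolution_well {t₀ r : ℝ} (hc : 0 ≤ c) (ht₀ : 0 < t₀) (hr : c * t₀ < r)
    (x₀ B : ℝ) {m : ℝ} (hm : 0 < m) :
    ∃ Ψ : ℝ → ℝ → ℝ, ContDiff ℝ 1 (fun p : ℝ × ℝ => Ψ p.1 p.2) ∧
      (∀ x t, c * |deriv (fun y => Ψ y t) x| < deriv (fun s => Ψ x s) t) ∧
      (∀ x t, -m < Ψ x t) ∧ (∀ x, r < |x - x₀| → B ≤ Ψ x 0) ∧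
      (∀ᶠ p in cocompact (ℝ × ℝ) ⊓ 𝓟 {p : ℝ × ℝ | 0 ≤ p.2}, B ≤ Ψ p.1 p.2) ∧
      Ψ x₀ t₀ < 0 := by
  obtain ⟨ρ, hρ, hρr⟩ := exists_between hr
  set v := ρ / t₀
  have hvt : v * t₀ = ρ := div_mul_cancel₀ _ ht₀.ne'
  have hcv : c < v := (lt_div_iff₀ ht₀).2 hρ
  have hv : 0 < v := hc.trans_lt hcv
  set γ := (|B| + m) / (r - ρ)
  have hγ : 0 < γ := div_pos (by positivity) (by linarith)
  have hγr : γ * (r - ρ) = |B| + m := div_mul_cancel₀ _ (by linarith)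
  set κ := m / (4 * γ)
  have hκ : 0 < κ := by positivity
  have hγκ : γ * κ = m / 4 := by simp only [κ]; field_simp
  -- `Ψ(·, t)` is a well, negative roughly on `|x - x₀| < ρ - v t`; `γ` lifts it above `B` once
  -- `v t + |x - x₀| ≥ r`, and `κ` keeps the smoothing error at `(x₀, t₀)` below `m / 4`.
  have hS : ContDiff ℝ 1 (smoothPos κ) := contDiff_smoothPos hκ.ne'
  set h : ℝ → ℝ := fun u => -m / 4 + γ * smoothPos κ (u - ρ)
  have hh : Differentiable ℝ h := by fun_prop
  have hh' : ∀ u, 0 < deriv h u := fun u => by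
    simpa only [h, deriv_const_add', deriv_const_mul_field', deriv_comp_sub_const] using
      mul_pos hγ (deriv_smoothPos_pos hκ.ne' (u - ρ))
  set Ψ : ℝ → ℝ → ℝ := fun x t => h (v * t + (x - x₀)) + h (v * t - (x - x₀))
  have hΨ_ge : ∀ x t, -m / 2 + γ * (v * t - ρ + |x - x₀|) ≤ Ψ x t := fun x t => by
    have := add_abs_le_smoothPos_add κ (v * t - ρ) (x - x₀)
    simp only [Ψ, h, add_sub_right_comm, sub_right_comm _ (x - x₀)]
    nlinarith
  have hΨ_far : ∀ x t, r ≤ v * t + |x - x₀| → B ≤ Ψ x t := fun x t hxt => by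
    nlinarith [hΨ_ge x t, le_abs_self B]
  refine ⟨Ψ, by fun_prop, strictSupersolution_counterFronts hh hh' hc hcv x₀, fun x t => ?_,
    fun x hx => hΨ_far x 0 (by simpa using hx.le),
    eventually_cocompact_inf_halfPlane 0 (|x₀| + r) (r / v) fun x t ht hxt => hΨ_far x t ?_, ?_⟩
  · have := smoothPos_nonneg κ (v * t + (x - x₀) - ρ)
    have := smoothPos_nonneg κ (v * t - (x - x₀) - ρ)
    simp only [Ψ, h]
    nlinarith
  · have := abs_sub_abs_le_abs_sub x x₀
    rcases hxt with hx | ht'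
    · rw [zero_mul, sub_zero] at hx
      nlinarith [mul_nonneg hv.le ht]
    · nlinarith [(div_lt_iff₀' hv).1 ht', abs_nonneg (x - x₀)]
  · have := smoothPos_le_of_nonpos hκ.le (le_refl 0)
    simp only [Ψ, h, hvt, sub_self, add_zero, sub_zero]
    nlinarith

lemma exists_strictSubsolution_bump {t₀ ζ μ x₀ y₀ : ℝ} (ht₀ : 0 < t₀) (hζ : 0 < ζ) (hμ : 0 < μ)
    (hxy : |x₀ - y₀| ≤ c * t₀) (B : ℝ) :
    ∃ φ : ℝ → ℝ → ℝ, ContDiff ℝ 1 (fun p : ℝ × ℝ => φ p.1 p.2) ∧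
      (∀ x t, deriv (fun s => φ x s) t < c * |deriv (fun y => φ y t) x|) ∧
      (∀ x t, φ x t ≤ μ) ∧ (∀ x, ζ ≤ |x - y₀| → φ x 0 ≤ B) ∧
      (∀ᶠ p in cocompact (ℝ × ℝ) ⊓ 𝓟 {p : ℝ × ℝ | 0 ≤ p.2}, φ p.1 p.2 ≤ B) ∧
      0 < φ x₀ t₀ := by
  set v := (x₀ - y₀) / t₀
  have hvt : x₀ - v * t₀ = y₀ := by simp only [v]; field_simp; ring
  have hv : |v| ≤ c := by rw [abs_div, abs_of_pos ht₀, div_le_iff₀ ht₀]; exact hxy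
  set β := 2 * (μ + |B|) / ζ
  have hβ : 0 < β := by positivity
  have hβζ : β * (ζ / 2) = μ + |B| := by simp only [β]; field_simp
  set κ := μ / (2 * β + 1)
  have hκ : 0 < κ := by positivity
  have hβκ : β * κ + κ / 2 = μ / 2 := by simp only [κ]; field_simp
  -- `φ(·, t)` has its plateau on `|x - v t - y₀| ≤ ζ / 2` and sinks with `t` through `q`; `β`
  -- brings it down to `-|B|` at distance `ζ` from the plateau's centre, and `κ` keeps the
  -- smoothing error at `(x₀, t₀)` below `μ / 2`.
  have hS : ContDiff ℝ 1 (smoothPos κ) := contDiff_smoothPos hκ.ne'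
  set P : ℝ → ℝ := fun u =>
    μ - β * (smoothPos κ (-(ζ / 2) + (u - y₀)) + smoothPos κ (-(ζ / 2) - (u - y₀)))
  set q : ℝ → ℝ := fun s => smoothPos κ (s - t₀)
  have hq : ∀ s, 0 < deriv q s := fun s => by
    simpa only [q, deriv_comp_sub_const] using deriv_smoothPos_pos hκ.ne' (s - t₀)
  set φ : ℝ → ℝ → ℝ := fun x t => P (x - v * t) - q t
  have hφ_le : ∀ x t, φ x t ≤ μ - β * (-(ζ / 2) + |x - v * t - y₀|) - q t := fun x t => by
    have := add_abs_le_smoothPos_add κ (-(ζ / 2)) (x - v * t - y₀)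
    simp only [φ, P]
    nlinarith
  have hq_nonneg : ∀ s, 0 ≤ q s := fun s => smoothPos_nonneg κ _
  have hφ_low : ∀ x t, ζ ≤ |x - v * t - y₀| → φ x t ≤ B := fun x t hx => by
    nlinarith [hφ_le x t, hq_nonneg t, neg_abs_le B]
  have hφ_top : ∀ x t, φ x t ≤ μ - q t := fun x t => by
    have := smoothPos_nonneg κ (-(ζ / 2) + (x - v * t - y₀))
    have := smoothPos_nonneg κ (-(ζ / 2) - (x - v * t - y₀))
    simp only [φ, P]
    nlinarith
  refine ⟨φ, by fun_prop, strictSubsolution_travelling (by fun_prop) (by fun_prop) hq hv,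
    fun x t => (hφ_top x t).trans (by linarith [hq_nonneg t]),
    fun x hx => hφ_low x 0 (by simpa using hx),
    eventually_cocompact_inf_halfPlane (P := fun x t => φ x t ≤ B) v (|y₀| + ζ) (t₀ + μ + |B|)
      fun x t _ hxt => ?_, ?_⟩
  · rcases hxt with hx | ht
    · exact hφ_low x t (by linarith [abs_sub_abs_le_abs_sub (x - v * t) y₀])
    · nlinarith [hφ_top x t, le_smoothPos κ (t - t₀), neg_abs_le B]
  · have h₁ := smoothPos_le_of_nonpos hκ.le (by linarith : -(ζ / 2) ≤ 0)
    have h₀ := smoothPos_le_of_nonpos hκ.le (le_refl 0)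
    simp only [φ, P, q, hvt, sub_self, add_zero, sub_zero]
    nlinarith

end Barriers

section FiniteSpeed

variable {c : ℝ} {w : ℝ → ℝ → ℝ}

lemma continuous_initialTrace
    (hwc : ContinuousOn (fun p : ℝ × ℝ => w p.1 p.2) {p : ℝ × ℝ | 0 ≤ p.2}) :
    Continuous fun y => w y 0 :=
  continuousOn_univ.1 <| hwc.comp (Continuous.prodMk_left 0).continuousOn fun _ _ => le_refl (0 : ℝ)

lemma continuousAt_timeSlice
    (hwc : ContinuousOn (fun p : ℝ × ℝ => w p.1 p.2) {p : ℝ × ℝ | 0 ≤ p.2}) (x : ℝ) {t : ℝ}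
    (ht : 0 < t) : ContinuousAt (fun s => w x s) t := by
  have hnhds : {p : ℝ × ℝ | 0 ≤ p.2} ∈ 𝓝 (x, t) := mem_of_superset
    ((isOpen_lt continuous_const continuous_snd).mem_nhds ht) fun p (hp : 0 < p.2) => hp.le
  exact (hwc.continuousAt hnhds).comp (Continuous.prodMk_right x).continuousAt

theorem IsEikonalSubsolution.lt_zero_of_initial_neg {B : ℝ} (hw : IsEikonalSubsolution c w)
    (hwc : ContinuousOn (fun p : ℝ × ℝ => w p.1 p.2) {p : ℝ × ℝ | 0 ≤ p.2}) (hc : 0 ≤ c)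
    (hB : ∀ x t, 0 ≤ t → w x t ≤ B) {x₀ t₀ r : ℝ} (ht₀ : 0 < t₀) (hr : c * t₀ < r)
    (hneg : ∀ y ∈ Metric.closedBall x₀ r, w y 0 < 0) : w x₀ t₀ < 0 := by
  obtain ⟨y₁, hy₁, hmax⟩ := (isCompact_closedBall x₀ r).exists_isMaxOn
    (Metric.nonempty_closedBall.2 (by nlinarith)) (continuous_initialTrace hwc).continuousOn
  obtain ⟨Ψ, hΨ, hstrict, hΨm, hΨB, hfar, hΨ₀⟩ :=
    exists_strictSupersolution_well hc ht₀ hr x₀ B (neg_pos.2 (hneg y₁ hy₁))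
  have hinit : ∀ x, w x 0 ≤ Ψ x 0 := fun x => by
    rcases le_or_gt |x - x₀| r with hx | hx
    · linarith [isMaxOn_iff.1 hmax x (Metric.mem_closedBall.2 hx), hΨm x 0]
    · exact (hB x 0 le_rfl).trans (hΨB x hx)
  have hfar' : ∀ᶠ p in cocompact (ℝ × ℝ) ⊓ 𝓟 {p : ℝ × ℝ | 0 ≤ p.2}, w p.1 p.2 ≤ Ψ p.1 p.2 := by
    filter_upwards [hfar, mem_inf_of_right (mem_principal_self _)] with p hBΨ hp
    exact (hB p.1 p.2 hp).trans hBΨ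
  exact (hw.le_of_strictSupersolution hwc hΨ (fun x t _ => hstrict x t) hinit hfar'
    ht₀.le).trans_lt hΨ₀

theorem IsEikonalSupersolution.pos_of_initial_pos {B : ℝ} (hw : IsEikonalSupersolution c w)
    (hwc : ContinuousOn (fun p : ℝ × ℝ => w p.1 p.2) {p : ℝ × ℝ | 0 ≤ p.2})
    (hB : ∀ x t, 0 ≤ t → B ≤ w x t) {x₀ y₀ t₀ : ℝ} (ht₀ : 0 < t₀) (hy₀ : 0 < w y₀ 0)
    (hxy : |x₀ - y₀| ≤ c * t₀) : 0 < w x₀ t₀ := by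
  obtain ⟨ζ, hζ, hball⟩ := Metric.eventually_nhds_iff.1 <|
    (continuous_initialTrace hwc).continuousAt.eventually (lt_mem_nhds (half_lt_self hy₀))
  obtain ⟨φ, hφ, hstrict, hφμ, hφB, hfar, hφ₀⟩ :=
    exists_strictSubsolution_bump ht₀ hζ (half_pos hy₀) hxy B
  have hinit : ∀ x, φ x 0 ≤ w x 0 := fun x => by
    rcases lt_or_ge |x - y₀| ζ with hx | hx
    · exact (hφμ x 0).trans (hball (by rwa [Real.dist_eq])).le
    · exact (hφB x hx).trans (hB x 0 le_rfl)
  have hfar' : ∀ᶠ p in cocompact (ℝ × ℝ) ⊓ 𝓟 {p : ℝ × ℝ | 0 ≤ p.2}, φ p.1 p.2 ≤ w p.1 p.2 := by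
    filter_upwards [hfar, mem_inf_of_right (mem_principal_self _)] with p hφB hp
    exact hφB.trans (hB p.1 p.2 hp)
  exact hφ₀.trans_le (hw.ge_of_strictSubsolution hwc hφ (fun x t _ => hstrict x t) hinit hfar'
    ht₀.le)

end FiniteSpeed

lemma eq_zero_of_neg_left_of_pos_right {f : ℝ → ℝ} {t : ℝ} (hf : ContinuousAt f t)
    (hl : ∀ᶠ s in 𝓝[<] t, f s < 0) (hr : ∀ᶠ s in 𝓝[>] t, 0 < f s) : f t = 0 :=
  le_antisymm (le_of_tendsto (hf.mono_left nhdsWithin_le_nhds) (hl.mono fun _ h => h.le))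
    (ge_of_tendsto (hf.mono_left nhdsWithin_le_nhds) (hr.mono fun _ h => h.le))

lemma setOf_neg_eq_and_setOf_pos_eq {α : Type*} {f d : α → ℝ} {r : ℝ}
    (hneg : ∀ x, r < d x → f x < 0) (hpos : ∀ x, d x < r → 0 < f x)
    (hzero : ∀ x, d x = r → f x = 0) :
    {x | f x < 0} = {x | d x > r} ∧ {x | 0 < f x} = {x | d x < r} := by
  have key : ∀ x, (f x < 0 ↔ r < d x) ∧ (0 < f x ↔ d x < r) := fun x => by
    rcases lt_trichotomy (d x) r with h | h | h
    · have := hpos x h; constructor <;> constructor <;> intro <;> linarith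
    · have := hzero x h; constructor <;> constructor <;> intro <;> linarith
    · have := hneg x h; constructor <;> constructor <;> intro <;> linarith
  exact ⟨ext fun x => (key x).1, ext fun x => (key x).2⟩

theorem front_characterization_general (Ω : Set ℝ) (cstar : ℝ) (g : ℝ → ℝ)
    (w : ℝ → ℝ → ℝ)
    (hΩne : Ω.Nonempty)
    (hc : 0 < cstar)
    (hgpos : ∀ x ∈ Ω, 0 < g x) (hgneg : ∀ x ∉ closure Ω, g x < 0)
    (hwcont : ContinuousOn (fun p : ℝ × ℝ => w p.1 p.2) {p : ℝ × ℝ | 0 ≤ p.2})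
    (hwbd : ∃ B : ℝ, ∀ x t : ℝ, 0 ≤ t → |w x t| ≤ B)
    (hwinit : ∀ x : ℝ, w x 0 = g x)
    (hsub : ∀ φ : ℝ → ℝ → ℝ, ContDiff ℝ 1 (fun p : ℝ × ℝ => φ p.1 p.2) →
      ∀ x t : ℝ, 0 < t →
        IsLocalMaxOn (fun p : ℝ × ℝ => w p.1 p.2 - φ p.1 p.2)
          {p : ℝ × ℝ | 0 < p.2} (x, t) →
        deriv (fun s => φ x s) t ≤ cstar * |deriv (fun y => φ y t) x|)
    (hsup : ∀ φ : ℝ → ℝ → ℝ, ContDiff ℝ 1 (fun p : ℝ × ℝ => φ p.1 p.2) →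
      ∀ x t : ℝ, 0 < t →
        IsLocalMinOn (fun p : ℝ × ℝ => w p.1 p.2 - φ p.1 p.2)
          {p : ℝ × ℝ | 0 < p.2} (x, t) →
        cstar * |deriv (fun y => φ y t) x| ≤ deriv (fun s => φ x s) t) :
    ∀ t : ℝ, 0 < t →
      {x : ℝ | w x t < 0} = {x : ℝ | Metric.infDist x Ω > cstar * t} ∧
      {x : ℝ | 0 < w x t} = {x : ℝ | Metric.infDist x Ω < cstar * t} := by
  obtain ⟨B, hB⟩ := hwbd
  have hneg : ∀ x t, 0 < t → cstar * t < Metric.infDist x Ω → w x t < 0 := by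
    intro x t ht hd
    obtain ⟨r, hr, hrd⟩ := exists_between hd
    refine (show IsEikonalSubsolution cstar w from hsub).lt_zero_of_initial_neg hwcont hc.le
      (fun x t ht => (abs_le.1 (hB x t ht)).2) ht hr fun y hy => hwinit y ▸ hgneg y fun hyΩ => ?_
    rw [← Metric.infDist_closure] at hrd
    exact Metric.disjoint_closedBall_of_lt_infDist hrd |>.notMem_of_mem_left hy hyΩ
  have hpos : ∀ x t, 0 < t → Metric.infDist x Ω < cstar * t → 0 < w x t := by
    intro x t ht hd
    obtain ⟨y, hyΩ, hy⟩ := (Metric.infDist_lt_iff hΩne).1 hd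
    exact (show IsEikonalSupersolution cstar w from hsup).pos_of_initial_pos hwcont
      (fun x t ht => (abs_le.1 (hB x t ht)).1) ht (hwinit y ▸ hgpos y hyΩ)
      (by rw [← Real.dist_eq]; exact hy.le)
  intro t ht
  refine setOf_neg_eq_and_setOf_pos_eq (hneg · t ht) (hpos · t ht) fun x hx => ?_
  refine eq_zero_of_neg_left_of_pos_right (continuousAt_timeSlice hwcont x ht) ?_ ?_
  · filter_upwards [Ioo_mem_nhdsLT ht] with s hs
    exact hneg x s hs.1 (hx ▸ mul_lt_mul_of_pos_left hs.2 hc)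
  · filter_upwards [self_mem_nhdsWithin] with s (hs : t < s)
    exact hpos x s (ht.trans hs) (hx ▸ mul_lt_mul_of_pos_left hs hc)

/-- characterization of the front for the eikonal equation
`∂_t w = c* |∂ₓ w|`. If `g` is a bounded `C¹` profile, positive on the nonempty bounded
interval `Ω`, negative off `cl(Ω)`, with a maximum at `x̄ ∈ Ω`, strictly increasing on
`(−∞, x̄]` and strictly decreasing on `[x̄, ∞)`, and `w` is a bounded continuous
viscosity solution with `w(·,0) = g`, then for every `t > 0`:
`{w(·,t) < 0} = {dist(·,Ω) > c* t}` and `{w(·,t) > 0} = {dist(·,Ω) < c* t}`. -/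
theorem front_characterization (Ω : Set ℝ) (cstar : ℝ) (g : ℝ → ℝ) (xbar : ℝ)
    (w : ℝ → ℝ → ℝ)
    (hΩne : Ω.Nonempty) (hΩbd : Bornology.IsBounded Ω) (hΩint : OrdConnected Ω)
    (hc : 0 < cstar)
    (hg1 : ContDiff ℝ 1 g) (hgbd : ∃ B : ℝ, ∀ x : ℝ, |g x| ≤ B)
    (hgpos : ∀ x ∈ Ω, 0 < g x) (hgneg : ∀ x ∉ closure Ω, g x < 0)
    (hxbar : xbar ∈ Ω) (hgmax : ∀ x : ℝ, g x ≤ g xbar)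
    (hgmono : StrictMonoOn g (Iic xbar)) (hganti : StrictAntiOn g (Ici xbar))
    (hwcont : ContinuousOn (fun p : ℝ × ℝ => w p.1 p.2) {p : ℝ × ℝ | 0 ≤ p.2})
    (hwbd : ∃ B : ℝ, ∀ x t : ℝ, 0 ≤ t → |w x t| ≤ B)
    (hwinit : ∀ x : ℝ, w x 0 = g x)
    (hsub : ∀ φ : ℝ → ℝ → ℝ, ContDiff ℝ 1 (fun p : ℝ × ℝ => φ p.1 p.2) →
      ∀ x t : ℝ, 0 < t →
        IsLocalMaxOn (fun p : ℝ × ℝ => w p.1 p.2 - φ p.1 p.2)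
          {p : ℝ × ℝ | 0 < p.2} (x, t) →
        deriv (fun s => φ x s) t ≤ cstar * |deriv (fun y => φ y t) x|)
    (hsup : ∀ φ : ℝ → ℝ → ℝ, ContDiff ℝ 1 (fun p : ℝ × ℝ => φ p.1 p.2) →
      ∀ x t : ℝ, 0 < t →
        IsLocalMinOn (fun p : ℝ × ℝ => w p.1 p.2 - φ p.1 p.2)
          {p : ℝ × ℝ | 0 < p.2} (x, t) →
        cstar * |deriv (fun y => φ y t) x| ≤ deriv (fun s => φ x s) t) :
    ∀ t : ℝ, 0 < t →
      {x : ℝ | w x t < 0} = {x : ℝ | Metric.infDist x Ω > cstar * t} ∧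
      {x : ℝ | 0 < w x t} = {x : ℝ | Metric.infDist x Ω < cstar * t} :=
  front_characterization_general Ω cstar g w hΩne hc hgpos hgneg hwcont hwbd hwinit hsub hsup
end
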